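/- Let T > 0 and a, G ≥ 0, and let e, φ₀, φ₁, ψ₀, ψ₁ : [0,T] × ℝ → ℝ be continuous and 1-periodic in the second variable, with e continuously differentiable, |φ₀(t,x)| ≤ a and |φ₁(t,x)| ≤ a for all (t,x), ∫₀¹ |ψ₀(t,x)| dx ≤ G and ∫₀¹ |ψ₁(t,x)| dx ≤ G for all t ∈ [0,T], and suppose ∂ₜe = φ₀·e + ψ₀ and ∂ₓe = φ₁·e + ψ₁ on [0,T] × ℝ. Then |e(t,x)| ≤ (1 + a)·(∫₀¹ |e(0,y)| dy + G·t)·e^{a·t} + G for all (t,x) ∈ [0,T] × ℝ. -/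

import Mathlib

/-!
Integrating `|∂ₜe| ≤ a|e| + |ψ₀|` in time and then over a period gives
`‖e(t)‖₁ ≤ ‖e(0)‖₁ + G t + a ∫₀ᵗ ‖e(s)‖₁ ds`, so Grönwall's inequality yields
`‖e(t)‖₁ ≤ (‖e(0)‖₁ + G t) e^{at}`. A periodic `C¹` function differs from its value at a
minimum point of `|f|` on a period, which is at most the mean of `|f|`, by at most `∫|f'|` over a
period; with `|∂ₓe| ≤ a|e| + |ψ₁|` this gives `|e(t,x)| ≤ (1 + a)‖e(t)‖₁ + G`.
-/

open Real MeasureTheory intervalIntegral Set Function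

theorem Function.Periodic.deriv {𝕜 F : Type*} [NontriviallyNormedField 𝕜] [NormedAddCommGroup F]
    [NormedSpace 𝕜 F] {f : 𝕜 → F} {c : 𝕜} (hf : Periodic f c) : Periodic (_root_.deriv f) c :=
  fun x => by rw [← deriv_comp_add_const, hf.funext]

theorem abs_sub_le_integral_abs_of_hasDerivAt {f f' : ℝ → ℝ} {a b : ℝ} (hab : a ≤ b)
    (hf : ∀ x ∈ uIcc a b, HasDerivAt f (f' x) x) (hf' : IntervalIntegrable f' volume a b) :
    |f b - f a| ≤ ∫ x in a..b, |f' x| := by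
  rw [← integral_eq_sub_of_hasDerivAt hf hf']
  exact abs_integral_le_integral_abs hab

theorem abs_le_integral_abs_div_add_integral_abs_deriv_of_periodic {f : ℝ → ℝ} {p : ℝ}
    (hf : Periodic f p) (hp : 0 < p) (hf1 : ContDiff ℝ 1 f) (x : ℝ) :
    |f x| ≤ (∫ y in 0..p, |f y|) / p + ∫ y in 0..p, |deriv f y| := by
  have hfc := hf1.continuous
  have hdc := hf1.continuous_deriv le_rfl
  have hf_abs : Periodic (fun y => |f y|) p := fun y => by simp only [hf y]
  have hdf_abs : Periodic (fun y => |deriv f y|) p := fun y => by simp only [hf.deriv y]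
  obtain ⟨y₀, hy₀, hmin⟩ := isCompact_Icc.exists_isMinOn (nonempty_Icc.2 (sub_le_self x hp.le))
    (hfc.abs.continuousOn : ContinuousOn (fun y => |f y|) (Icc (x - p) x))
  have hmean : |f y₀| ≤ (∫ y in 0..p, |f y|) / p := by
    rw [le_div_iff₀ hp]
    calc |f y₀| * p = ∫ _ in (x - p)..x, |f y₀| := by simp [mul_comm]
      _ ≤ ∫ y in (x - p)..x, |f y| :=
        integral_mono_on (by linarith) intervalIntegrable_const
          (hfc.abs.intervalIntegrable _ _) fun y hy => hmin hy
      _ = ∫ y in 0..p, |f y| := by simpa using hf_abs.intervalIntegral_add_eq (x - p) 0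
  have hvar : |f x - f y₀| ≤ ∫ y in 0..p, |deriv f y| := by
    calc |f x - f y₀| ≤ ∫ y in y₀..x, |deriv f y| :=
          abs_sub_le_integral_abs_of_hasDerivAt hy₀.2
            (fun y _ => (hf1.differentiable one_ne_zero y).hasDerivAt) (hdc.intervalIntegrable _ _)
      _ ≤ ∫ y in (x - p)..x, |deriv f y| :=
        integral_mono_interval hy₀.1 hy₀.2 le_rfl (ae_of_all _ fun _ => abs_nonneg _)
          (hdc.abs.intervalIntegrable _ _)
      _ = ∫ y in 0..p, |deriv f y| := by simpa using hdf_abs.intervalIntegral_add_eq (x - p) 0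
  linarith [abs_sub_abs_le_abs_sub (f x) (f y₀)]

theorem integral_abs_mul_add_le {φ f ψ : ℝ → ℝ} {a G α β : ℝ} (hαβ : α ≤ β)
    (hφ : Continuous φ) (hf : Continuous f) (hψ : Continuous ψ)
    (hφa : ∀ x ∈ Icc α β, |φ x| ≤ a) (hψG : ∫ x in α..β, |ψ x| ≤ G) :
    ∫ x in α..β, |φ x * f x + ψ x| ≤ a * (∫ x in α..β, |f x|) + G := by
  calc ∫ x in α..β, |φ x * f x + ψ x| ≤ ∫ x in α..β, (a * |f x| + |ψ x|) := by
        refine integral_mono_on hαβ (Continuous.intervalIntegrable (by fun_prop) _ _)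
          (Continuous.intervalIntegrable (by fun_prop) _ _) fun x hx => ?_
        calc |φ x * f x + ψ x| ≤ |φ x| * |f x| + |ψ x| := by rw [← abs_mul]; exact abs_add_le _ _
          _ ≤ a * |f x| + |ψ x| := by gcongr; exact hφa x hx
    _ = a * (∫ x in α..β, |f x|) + ∫ x in α..β, |ψ x| := by
        rw [intervalIntegral.integral_add (Continuous.intervalIntegrable (by fun_prop) _ _)
          (Continuous.intervalIntegrable (by fun_prop) _ _), intervalIntegral.integral_const_mul]
    _ ≤ a * (∫ x in α..β, |f x|) + G := by linarith

theorem integral_abs_le_add_integral_integral_abs_deriv {u u' : ℝ → ℝ → ℝ} {t₀ t₁ α β : ℝ}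
    (ht : t₀ ≤ t₁) (hαβ : α ≤ β) (hu : Continuous (uncurry u)) (hu' : Continuous (uncurry u'))
    (hderiv : ∀ r ∈ Icc t₀ t₁, ∀ x, HasDerivAt (fun s => u s x) (u' r x) r) :
    ∫ x in α..β, |u t₁ x| ≤ (∫ x in α..β, |u t₀ x|) + ∫ r in t₀..t₁, ∫ x in α..β, |u' r x| := by
  have hswap : IntegrableOn (uncurry fun x r => |u' r x|) (uIoc α β ×ˢ uIoc t₀ t₁) :=
    ((hu'.comp continuous_swap).abs.continuousOn.integrableOn_compact
      (isCompact_uIcc.prod isCompact_uIcc)).mono_set (prod_mono uIoc_subset_uIcc uIoc_subset_uIcc)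
  calc ∫ x in α..β, |u t₁ x| ≤ ∫ x in α..β, (|u t₀ x| + ∫ r in t₀..t₁, |u' r x|) := by
        refine integral_mono_on hαβ (Continuous.intervalIntegrable (by fun_prop) _ _)
          (Continuous.intervalIntegrable (by fun_prop) _ _) fun x _ => ?_
        have := abs_sub_le_integral_abs_of_hasDerivAt ht
          (fun r hr => hderiv r (uIcc_of_le ht ▸ hr) x)
          (Continuous.intervalIntegrable (by fun_prop) _ _)
        linarith [abs_sub_abs_le_abs_sub (u t₁ x) (u t₀ x)]
    _ = (∫ x in α..β, |u t₀ x|) + ∫ r in t₀..t₁, ∫ x in α..β, |u' r x| := by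
        rw [intervalIntegral.integral_add (Continuous.intervalIntegrable (by fun_prop) _ _)
          (Continuous.intervalIntegrable (by fun_prop) _ _),
          intervalIntegral_intervalIntegral_swap hswap]

theorem integral_abs_le_of_hasDerivAt_eq_mul_add {u φ ψ : ℝ → ℝ → ℝ} {a G t₀ t₁ α β : ℝ}
    (ht : t₀ ≤ t₁) (hαβ : α ≤ β) (hu : Continuous (uncurry u)) (hφ : Continuous (uncurry φ))
    (hψ : Continuous (uncurry ψ))
    (hderiv : ∀ r ∈ Icc t₀ t₁, ∀ x, HasDerivAt (fun s => u s x) (φ r x * u r x + ψ r x) r)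
    (hφa : ∀ r ∈ Icc t₀ t₁, ∀ x ∈ Icc α β, |φ r x| ≤ a)
    (hψG : ∀ r ∈ Icc t₀ t₁, ∫ x in α..β, |ψ r x| ≤ G) :
    ∫ x in α..β, |u t₁ x| ≤
      (∫ x in α..β, |u t₀ x|) + G * (t₁ - t₀) + a * ∫ r in t₀..t₁, ∫ x in α..β, |u r x| := by
  calc ∫ x in α..β, |u t₁ x|
      ≤ (∫ x in α..β, |u t₀ x|) + ∫ r in t₀..t₁, ∫ x in α..β, |φ r x * u r x + ψ r x| :=
        integral_abs_le_add_integral_integral_abs_deriv ht hαβ hu (by fun_prop) hderiv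
    _ ≤ (∫ x in α..β, |u t₀ x|) + ∫ r in t₀..t₁, (a * (∫ x in α..β, |u r x|) + G) := by
        gcongr
        refine integral_mono_on ht (Continuous.intervalIntegrable (by fun_prop) _ _)
          (Continuous.intervalIntegrable (by fun_prop) _ _) fun r hr => ?_
        exact integral_abs_mul_add_le hαβ (by fun_prop) (by fun_prop) (by fun_prop) (hφa r hr)
          (hψG r hr)
    _ = (∫ x in α..β, |u t₀ x|) + G * (t₁ - t₀) + a * ∫ r in t₀..t₁, ∫ x in α..β, |u r x| := by
        rw [intervalIntegral.integral_add (Continuous.intervalIntegrable (by fun_prop) _ _)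
          intervalIntegrable_const, intervalIntegral.integral_const_mul,
          intervalIntegral.integral_const, smul_eq_mul]
        ring

theorem add_mul_gronwallBound_zero (a C t : ℝ) :
    C + a * gronwallBound 0 a C t = C * exp (a * t) := by
  rcases eq_or_ne a 0 with rfl | ha
  · simp
  · rw [gronwallBound_of_K_ne_0 ha]
    field_simp
    ring

theorem le_mul_exp_of_le_add_mul_integral {u : ℝ → ℝ} {a C t : ℝ} (ha : 0 ≤ a) (ht : 0 ≤ t)
    (hu : Continuous u) (h : ∀ s ∈ Icc 0 t, u s ≤ C + a * ∫ r in 0..s, u r) :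
    u t ≤ C * exp (a * t) := by
  have hderiv (s : ℝ) : HasDerivAt (fun s => ∫ r in 0..s, u r) (u s) s :=
    integral_hasDerivAt_right (hu.intervalIntegrable _ _) (hu.stronglyMeasurableAtFilter _ _)
      hu.continuousAt
  have hgronwall := le_gronwallBound_of_liminf_deriv_right_le (f := fun s => ∫ r in 0..s, u r)
    (δ := 0) (K := a) (ε := C) (by fun_prop)
    (fun s _ _ hr => (hderiv s).hasDerivWithinAt.liminf_right_slope_le hr) (by simp)
    (fun s hs => by linarith [h s (Ico_subset_Icc_self hs)]) t ⟨ht, le_rfl⟩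
  rw [sub_zero] at hgronwall
  calc u t ≤ C + a * ∫ r in 0..t, u r := h t ⟨ht, le_rfl⟩
    _ ≤ C + a * gronwallBound 0 a C t := by gcongr
    _ = C * exp (a * t) := add_mul_gronwallBound_zero a C t

theorem electric_field_bound_general
    (T a G : ℝ) (ha : 0 ≤ a) (hG : 0 ≤ G)
    (e φ₀ φ₁ ψ₀ ψ₁ : ℝ → ℝ → ℝ)
    (he : ContDiff ℝ 1 (Function.uncurry e))
    (hφ₀ : Continuous (Function.uncurry φ₀)) (hφ₁ : Continuous (Function.uncurry φ₁))
    (hψ₀ : Continuous (Function.uncurry ψ₀)) (hψ₁ : Continuous (Function.uncurry ψ₁))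
    (heper : ∀ t, Function.Periodic (e t) 1)
    (hφ₀a : ∀ t ∈ Set.Icc (0:ℝ) T, ∀ x : ℝ, |φ₀ t x| ≤ a)
    (hφ₁a : ∀ t ∈ Set.Icc (0:ℝ) T, ∀ x : ℝ, |φ₁ t x| ≤ a)
    (hψ₀G : ∀ t ∈ Set.Icc (0:ℝ) T, (∫ x in (0:ℝ)..1, |ψ₀ t x|) ≤ G)
    (hψ₁G : ∀ t ∈ Set.Icc (0:ℝ) T, (∫ x in (0:ℝ)..1, |ψ₁ t x|) ≤ G)
    (heqt : ∀ t ∈ Set.Icc (0:ℝ) T, ∀ x : ℝ,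
      deriv (fun s => e s x) t = φ₀ t x * e t x + ψ₀ t x)
    (heqx : ∀ t ∈ Set.Icc (0:ℝ) T, ∀ x : ℝ,
      deriv (e t) x = φ₁ t x * e t x + ψ₁ t x) :
    ∀ t ∈ Set.Icc (0:ℝ) T, ∀ x : ℝ,
      |e t x| ≤ (1 + a) * ((∫ y in (0:ℝ)..1, |e 0 y|) + G * t) * Real.exp (a * t) + G := by
  intro t ht x
  have hec : Continuous (uncurry e) := he.continuous
  set I : ℝ → ℝ := fun s => ∫ y in (0:ℝ)..1, |e s y|
  have hderiv_t (r : ℝ) (hr : r ∈ Icc 0 T) (y : ℝ) :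
      HasDerivAt (fun s => e s y) (φ₀ r y * e r y + ψ₀ r y) r := by
    rw [← heqt r hr y]
    exact ((he.comp (contDiff_id.prodMk contDiff_const)).differentiable one_ne_zero r).hasDerivAt
  have hI_growth (s : ℝ) (hs : s ∈ Icc 0 t) : I s ≤ I 0 + G * t + a * ∫ r in 0..s, I r := by
    have hsub : Icc 0 s ⊆ Icc 0 T := Icc_subset_Icc_right (hs.2.trans ht.2)
    have hL1 := integral_abs_le_of_hasDerivAt_eq_mul_add hs.1 zero_le_one hec hφ₀ hψ₀
      (fun r hr => hderiv_t r (hsub hr)) (fun r hr y _ => hφ₀a r (hsub hr) y)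
      (fun r hr => hψ₀G r (hsub hr))
    rw [sub_zero] at hL1
    linarith [mul_le_mul_of_nonneg_left hs.2 hG]
  have hI_t : I t ≤ (I 0 + G * t) * exp (a * t) :=
    le_mul_exp_of_le_add_mul_integral ha ht.1 (by fun_prop) hI_growth
  have hosc := abs_le_integral_abs_div_add_integral_abs_deriv_of_periodic (heper t) one_pos
    (he.comp (contDiff_const.prodMk contDiff_id)) x
  simp only [div_one, funext (heqx t ht)] at hosc
  have hspace := integral_abs_mul_add_le (φ := φ₁ t) (f := e t) (ψ := ψ₁ t) zero_le_one
    (by fun_prop) (by fun_prop) (by fun_prop) (fun y _ => hφ₁a t ht y) (hψ₁G t ht)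
  calc |e t x| ≤ (1 + a) * I t + G := by linarith
    _ ≤ (1 + a) * ((I 0 + G * t) * exp (a * t)) + G := by gcongr
    _ = _ := by ring

/-- A priori bound on the rescaled electric field of the surface-symmetric
Einstein–Vlasov–Maxwell system: if `∂ₜe = φ₀ e + ψ₀` and `∂ₓe = φ₁ e + ψ₁` on
`[0,T] × S¹` with `|φᵢ| ≤ a` and `∫₀¹|ψᵢ| dx ≤ G`, then
`|e(t,x)| ≤ (1+a)(∫₀¹|e(0,·)| + G t) e^{a t} + G`. -/
theorem electric_field_bound
    (T a G : ℝ) (hT : 0 < T) (ha : 0 ≤ a) (hG : 0 ≤ G)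
    (e φ₀ φ₁ ψ₀ ψ₁ : ℝ → ℝ → ℝ)
    (he : ContDiff ℝ 1 (Function.uncurry e))
    (hφ₀ : Continuous (Function.uncurry φ₀)) (hφ₁ : Continuous (Function.uncurry φ₁))
    (hψ₀ : Continuous (Function.uncurry ψ₀)) (hψ₁ : Continuous (Function.uncurry ψ₁))
    (heper : ∀ t, Function.Periodic (e t) 1)
    (hφ₀per : ∀ t, Function.Periodic (φ₀ t) 1)
    (hφ₁per : ∀ t, Function.Periodic (φ₁ t) 1)
    (hψ₀per : ∀ t, Function.Periodic (ψ₀ t) 1)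
    (hψ₁per : ∀ t, Function.Periodic (ψ₁ t) 1)
    (hφ₀a : ∀ t ∈ Set.Icc (0:ℝ) T, ∀ x : ℝ, |φ₀ t x| ≤ a)
    (hφ₁a : ∀ t ∈ Set.Icc (0:ℝ) T, ∀ x : ℝ, |φ₁ t x| ≤ a)
    (hψ₀G : ∀ t ∈ Set.Icc (0:ℝ) T, (∫ x in (0:ℝ)..1, |ψ₀ t x|) ≤ G)
    (hψ₁G : ∀ t ∈ Set.Icc (0:ℝ) T, (∫ x in (0:ℝ)..1, |ψ₁ t x|) ≤ G)
    (heqt : ∀ t ∈ Set.Icc (0:ℝ) T, ∀ x : ℝ,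
      deriv (fun s => e s x) t = φ₀ t x * e t x + ψ₀ t x)
    (heqx : ∀ t ∈ Set.Icc (0:ℝ) T, ∀ x : ℝ,
      deriv (e t) x = φ₁ t x * e t x + ψ₁ t x) :
    ∀ t ∈ Set.Icc (0:ℝ) T, ∀ x : ℝ,
      |e t x| ≤ (1 + a) * ((∫ y in (0:ℝ)..1, |e 0 y|) + G * t) * Real.exp (a * t) + G :=
  electric_field_bound_general T a G ha hG e φ₀ φ₁ ψ₀ ψ₁ he hφ₀ hφ₁ hψ₀ hψ₁ heper hφ₀a hφ₁a hψ₀G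
    hψ₁G heqt heqx
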